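/- Let γ ≥ 2/3 and fₙ(x,y) := φₙ(y). Then for every n ≥ 1 one has ⟨fₙ, H₀ fₙ⟩ ≤ δₙ, and for every n ≥ 2 one has ⟨fₙ, (H₀ − γT₁) fₙ⟩ ≤ δₙ − γ < −γ + (2/3)ⁿ = −γ + ⟨fₙ, T₂ fₙ⟩. -/

import Mathlib

/-!
The functions `φₙ` live on the pairwise disjoint intervals `(p_{n-1}, pₙ)` and have unit
`L²(0,1)` norm. Hence `T₁ fₙ = fₙ`, and `k₂` acts on `φₙ` as multiplication by `(2/3)ⁿ`, which
gives `⟨fₙ, T₂ fₙ⟩ = (2/3)ⁿ`. On the support of `φₙ` only the tent `rₙ` contributes to `u`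
(nothing at all for `n = 1`, where `u` vanishes), so `u φₙ² ≤ δₙ φₙ²`; together with
`0 ≤ u ≤ 1` this bounds `⟨fₙ, H₀ fₙ⟩ = ∫∫ u(x) u(y) φₙ(y)²` by `δₙ`. Finally
`δₙ ≤ (√2/3)ⁿ < (2/3)ⁿ`.
-/

open MeasureTheory Filter Topology Metric

noncomputable section

namespace EfimovExample

/-- `pₙ = 1 - 2⁻ⁿ` (so `p₀ = 0`, `p₁ = 1/2`, ...). -/
def p (n : ℕ) : ℝ := 1 - (1 / 2 : ℝ) ^ n

/-- `qₙ = (p_{n-1} + pₙ)/2`, the midpoint of `[p_{n-1}, pₙ]`. -/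
def q (n : ℕ) : ℝ := (p (n - 1) + p n) / 2

/-- `ξₙ(y) = π (y - p_{n-1})/(pₙ - p_{n-1})` on `[p_{n-1}, pₙ]` and `0` elsewhere. -/
def ξ (n : ℕ) (y : ℝ) : ℝ :=
  if y ∈ Set.Icc (p (n - 1)) (p n) then
    Real.pi * (y - p (n - 1)) / (p n - p (n - 1))
  else 0

/-- `φₙ(y) = 2^{(n+1)/2} sin (ξₙ(y))`. -/
def φ (n : ℕ) (y : ℝ) : ℝ := 2 ^ ((n + 1 : ℝ) / 2) * Real.sin (ξ n y)

/-- The kernel `k₂(y,t) = Σ_{n ≥ 1} (2/3)ⁿ φₙ(y) φₙ(t)`. -/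
def k₂ (y t : ℝ) : ℝ := ∑' n : ℕ, (2 / 3 : ℝ) ^ (n + 1) * φ (n + 1) y * φ (n + 1) t

/-- The tent function `rₙ`, supported on `[p_{n-1}, pₙ]` with peak `1` at `qₙ`. -/
def r (n : ℕ) (x : ℝ) : ℝ :=
  if x ∈ Set.Icc (p (n - 1)) (q n) then (x - p (n - 1)) / (q n - p (n - 1))
  else if x ∈ Set.Icc (q n) (p n) then (p n - x) / (p n - q n)
  else 0

/-- `u(x) = 0` on `[0, 1/2]`, and `u(x) = Σ_{n ≥ 1} δₙ rₙ(x)` for `x > 1/2`. -/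
def u (δ : ℕ → ℝ) (x : ℝ) : ℝ :=
  if x ≤ 1 / 2 then 0 else ∑' n : ℕ, δ (n + 1) * r (n + 1) x

/-- Lebesgue measure on `[0,1]`. -/
def μI : Measure ℝ := volume.restrict (Set.Icc 0 1)

/-- Lebesgue measure on `[0,1]²`. -/
def μI2 : Measure (ℝ × ℝ) := μI.prod μI

open Set Real

lemma p_one : p 1 = 1 / 2 := by norm_num [p]

lemma p_succ_sub (n : ℕ) : p (n + 1) - p n = (1 / 2) ^ (n + 1) := by
  simp only [p, pow_succ]; ring

lemma p_strictMono : StrictMono p :=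
  strictMono_nat_of_lt_succ fun n => by
    have := p_succ_sub n
    have : (0 : ℝ) < (1 / 2) ^ (n + 1) := by positivity
    linarith

lemma p_mem_Icc (n : ℕ) : p n ∈ Icc 0 1 := by
  have : (1 / 2 : ℝ) ^ n ≤ 1 := pow_le_one₀ (by norm_num) (by norm_num)
  have : (0 : ℝ) ≤ (1 / 2) ^ n := by positivity
  constructor <;> simp only [p] <;> linarith

lemma q_mem_Ioo (n : ℕ) : q (n + 1) ∈ Ioo (p n) (p (n + 1)) := by
  have := p_strictMono (Nat.lt_succ_self n)
  simp only [q, Nat.add_sub_cancel]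
  constructor <;> linarith

lemma disjoint_Ioo_p {m n : ℕ} (h : m ≠ n) :
    Disjoint (Ioo (p m) (p (m + 1))) (Ioo (p n) (p (n + 1))) :=
  p_strictMono.monotone.pairwise_disjoint_on_Ioo_succ h

lemma support_r_subset (n : ℕ) : Function.support (r (n + 1)) ⊆ Ioo (p n) (p (n + 1)) := by
  intro x hx
  obtain ⟨hpq, hqp⟩ := q_mem_Ioo n
  by_contra hout
  rw [mem_Ioo, not_and_or, not_lt, not_lt] at hout
  apply hx
  simp only [r, Nat.add_sub_cancel, mem_Icc]
  split_ifs with h₁ h₂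
  · rw [show x = p n by rcases hout with h | h <;> linarith [h₁.1, h₁.2], sub_self, zero_div]
  · rw [show x = p (n + 1) by rcases hout with h | h <;> linarith [h₂.1, h₂.2], sub_self, zero_div]
  · rfl

lemma r_mem_Icc (n : ℕ) (x : ℝ) : r (n + 1) x ∈ Icc 0 1 := by
  obtain ⟨hpq, hqp⟩ := q_mem_Ioo n
  simp only [r, Nat.add_sub_cancel, mem_Icc]
  split_ifs with h₁ h₂
  · exact ⟨div_nonneg (by linarith) (by linarith), (div_le_one (by linarith)).2 (by linarith)⟩
  · exact ⟨div_nonneg (by linarith) (by linarith), (div_le_one (by linarith)).2 (by linarith)⟩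
  · norm_num

lemma support_φ_subset (n : ℕ) : Function.support (φ (n + 1)) ⊆ Ioo (p n) (p (n + 1)) := by
  intro y hy
  have hlt := p_strictMono (Nat.lt_succ_self n)
  by_contra hout
  rw [mem_Ioo, not_and_or, not_lt, not_lt] at hout
  apply hy
  simp only [φ, ξ, Nat.add_sub_cancel, mem_Icc]
  split_ifs with hmem
  · obtain rfl | rfl : y = p n ∨ y = p (n + 1) := by
      rcases hout with h | h
      exacts [Or.inl (by linarith [hmem.1]), Or.inr (by linarith [hmem.2])]
    · simp
    · rw [mul_div_assoc, div_self (sub_ne_zero.2 hlt.ne'), mul_one, sin_pi, mul_zero]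
  · rw [sin_zero, mul_zero]

lemma φ_mul_φ_of_ne {m n : ℕ} (h : m ≠ n) (y : ℝ) : φ (m + 1) y * φ (n + 1) y = 0 := by
  by_contra hy
  obtain ⟨hm, hn⟩ := mul_ne_zero_iff.1 hy
  exact disjoint_left.1 (disjoint_Ioo_p h) (support_φ_subset m hm) (support_φ_subset n hn)

lemma u_eq_of_mem_Ioo (δ : ℕ → ℝ) {k : ℕ} (hk : 1 ≤ k) {y : ℝ} (hy : y ∈ Ioo (p k) (p (k + 1))) :
    u δ y = δ (k + 1) * r (k + 1) y := by
  have hy_gt : ¬ y ≤ 1 / 2 := by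
    have := p_strictMono.monotone hk
    rw [p_one] at this
    linarith [hy.1]
  rw [u, if_neg hy_gt, tsum_eq_single k]
  intro j hj
  rw [Function.notMem_support.1 fun hr =>
    disjoint_left.1 (disjoint_Ioo_p hj) (support_r_subset j hr) hy, mul_zero]

lemma u_mem_Icc {δ : ℕ → ℝ} (hδ : ∀ n, 2 ≤ n → δ n ∈ Icc 0 1) (y : ℝ) : u δ y ∈ Icc 0 1 := by
  by_cases hy : y ≤ 1 / 2
  · rw [u, if_pos hy]
    norm_num
  by_cases hk : ∃ k, y ∈ Ioo (p k) (p (k + 1))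
  · obtain ⟨k, hk⟩ := hk
    have hk₁ : 1 ≤ k := by
      by_contra! h
      obtain rfl : k = 0 := by omega
      rw [zero_add, p_one] at hk
      exact hy hk.2.le
    rw [u_eq_of_mem_Ioo δ hk₁ hk]
    obtain ⟨hδ₀, hδ₁⟩ := hδ (k + 1) (by omega)
    obtain ⟨hr₀, hr₁⟩ := r_mem_Icc k y
    exact ⟨mul_nonneg hδ₀ hr₀, mul_le_one₀ hδ₁ hr₀ hr₁⟩
  · simp only [not_exists] at hk
    have hr (k : ℕ) : r (k + 1) y = 0 :=
      Function.notMem_support.1 fun h => hk k (support_r_subset k h)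
    simp [u, hr]

lemma u_mul_φ_sq_le {δ : ℕ → ℝ} {n : ℕ} (hδn : 0 ≤ δ (n + 1)) (y : ℝ) :
    u δ y * φ (n + 1) y ^ 2 ≤ δ (n + 1) * φ (n + 1) y ^ 2 := by
  by_cases hy : y ∈ Ioo (p n) (p (n + 1))
  swap
  · simp [Function.notMem_support.1 fun h => hy (support_φ_subset n h)]
  rcases Nat.eq_zero_or_pos n with rfl | hn
  · have : y ≤ 1 / 2 := by
      have := hy.2
      rw [zero_add, p_one] at this
      exact this.le
    rw [u, if_pos this, zero_mul]
    positivity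
  · rw [u_eq_of_mem_Ioo δ hn hy]
    have := (r_mem_Icc n y).2
    gcongr
    exact mul_le_of_le_one_right hδn this

lemma two_rpow_half_sq (n : ℕ) : ((2 : ℝ) ^ (((n : ℝ) + 1) / 2)) ^ 2 = 2 ^ (n + 1) := by
  rw [← rpow_natCast _ 2, ← rpow_mul (by norm_num), ← rpow_natCast]
  push_cast
  ring_nf

lemma φ_sq (n : ℕ) (y : ℝ) : φ n y ^ 2 = 2 ^ (n + 1) * sin (ξ n y) ^ 2 := by
  rw [φ, mul_pow, two_rpow_half_sq]

lemma integral_sin_sq_affine {a b : ℝ} (hab : a ≠ b) :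
    ∫ y in a..b, sin (π * (y - a) / (b - a)) ^ 2 = (b - a) / 2 := by
  have hba : b - a ≠ 0 := sub_ne_zero.2 hab.symm
  have hc : π / (b - a) ≠ 0 := div_ne_zero pi_ne_zero hba
  have hlin (y : ℝ) : π * (y - a) / (b - a) = π / (b - a) * y + -(π / (b - a) * a) := by
    field_simp; ring
  simp_rw [hlin]
  rw [intervalIntegral.integral_comp_mul_add (fun x => sin x ^ 2) hc, add_neg_cancel,
    show π / (b - a) * b + -(π / (b - a) * a) = π by field_simp; ring, integral_sin_sq,
    sin_pi, sin_zero, smul_eq_mul]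
  field_simp
  simp

instance isProbabilityMeasure_μI : IsProbabilityMeasure μI := by
  constructor
  rw [μI, Measure.restrict_apply_univ, Real.volume_Icc]
  norm_num

lemma integral_φ_sq (n : ℕ) : ∫ y, φ (n + 1) y ^ 2 ∂μI = 1 := by
  have hlt := p_strictMono (Nat.lt_succ_self n)
  have hsub : Icc (p n) (p (n + 1)) ⊆ Icc 0 1 := Icc_subset_Icc (p_mem_Icc n).1 (p_mem_Icc _).2
  calc ∫ y, φ (n + 1) y ^ 2 ∂μI = ∫ y in p n..p (n + 1), φ (n + 1) y ^ 2 := by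
        rw [μI, setIntegral_eq_of_subset_of_forall_sdiff_eq_zero measurableSet_Icc hsub,
          integral_Icc_eq_integral_Ioc, ← intervalIntegral.integral_of_le hlt.le]
        intro y hy
        simp [Function.notMem_support.1 fun h => hy.2 (Ioo_subset_Icc_self (support_φ_subset n h))]
    _ = ∫ y in p n..p (n + 1), 2 ^ (n + 2) * sin (π * (y - p n) / (p (n + 1) - p n)) ^ 2 := by
        refine intervalIntegral.integral_congr fun y hy => ?_
        rw [uIcc_of_le hlt.le] at hy
        simp only [φ_sq, ξ, Nat.add_sub_cancel, if_pos hy]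
    _ = 1 := by
        rw [intervalIntegral.integral_const_mul, integral_sin_sq_affine hlt.ne, p_succ_sub]
        rw [pow_succ, one_div, inv_pow]
        field_simp

lemma k₂_mul_φ (n : ℕ) (y t : ℝ) :
    k₂ y t * φ (n + 1) t = (2 / 3) ^ (n + 1) * φ (n + 1) y * φ (n + 1) t ^ 2 := by
  rw [k₂, ← tsum_mul_right, tsum_eq_single n]
  · ring
  · intro k hk
    rw [mul_assoc, mul_assoc, φ_mul_φ_of_ne hk t, mul_zero, mul_zero]

lemma integral_k₂_mul_φ (n : ℕ) (y : ℝ) :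
    ∫ t, k₂ y t * φ (n + 1) t ∂μI = (2 / 3) ^ (n + 1) * φ (n + 1) y := by
  simp_rw [k₂_mul_φ]
  rw [integral_const_mul, integral_φ_sq, mul_one]


section Product

variable {α β : Type*} [MeasurableSpace α] [MeasurableSpace β]

lemma inner_eq_integral_of_ae_eq_ofReal {μ : Measure α} {f g : Lp ℂ 2 μ} {a b : α → ℝ}
    (hf : f =ᵐ[μ] fun z => (a z : ℂ)) (hg : g =ᵐ[μ] fun z => (b z : ℂ)) :
    inner ℂ f g = ((∫ z, a z * b z ∂μ : ℝ) : ℂ) := by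
  rw [L2.inner_def, ← integral_complex_ofReal]
  refine integral_congr_ae ?_
  filter_upwards [hf, hg] with z hfz hgz
  rw [RCLike.inner_apply, hfz, hgz, Complex.conj_ofReal]
  push_cast
  ring

lemma ae_integral_fst_eq_of_ae_eq {E : Type*} [NormedAddCommGroup E] [NormedSpace ℝ E]
    [CompleteSpace E] {μ : Measure α} {ν : Measure β} [SFinite μ] [SFinite ν]
    {F : α × β → E} {g : β → E}
    (h : F =ᵐ[μ.prod ν] fun z => g z.2) :
    ∀ᵐ y ∂ν, ∫ x, F (x, y) ∂μ = μ.real univ • g y := by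
  have h_swap := Measure.measurePreserving_swap.quasiMeasurePreserving.ae h
  filter_upwards [Measure.ae_ae_of_ae_prod h_swap] with y hy
  exact (integral_congr_ae hy).trans (integral_const (g y))

end Product

lemma inner_H₀_le {δ : ℕ → ℝ} (hδ : ∀ n, 2 ≤ n → δ n ∈ Icc 0 1) {n : ℕ} (hδn : 0 ≤ δ (n + 1))
    {H₀ : Lp ℂ 2 μI2 →L[ℂ] Lp ℂ 2 μI2}
    (hH₀ : ∀ f : Lp ℂ 2 μI2,
      (H₀ f : ℝ × ℝ → ℂ) =ᵐ[μI2] fun xy => ((u δ xy.1 * u δ xy.2 : ℝ) : ℂ) * f xy)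
    {f : Lp ℂ 2 μI2} (hf : f =ᵐ[μI2] fun z => (φ (n + 1) z.2 : ℂ)) :
    (inner ℂ f (H₀ f)).re ≤ δ (n + 1) := by
  have hH₀f : H₀ f =ᵐ[μI2] fun z => ((u δ z.1 * u δ z.2 * φ (n + 1) z.2 : ℝ) : ℂ) := by
    filter_upwards [hH₀ f, hf] with z h₁ h₂
    rw [h₁, h₂]
    push_cast
    ring
  rw [inner_eq_integral_of_ae_eq_ofReal hf hH₀f, Complex.ofReal_re]
  have hbound (z : ℝ × ℝ) :
      φ (n + 1) z.2 * (u δ z.1 * u δ z.2 * φ (n + 1) z.2) ≤ δ (n + 1) * φ (n + 1) z.2 ^ 2 := by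
    obtain ⟨hu₀, hu₁⟩ := u_mem_Icc hδ z.1
    calc φ (n + 1) z.2 * (u δ z.1 * u δ z.2 * φ (n + 1) z.2)
        = u δ z.1 * (u δ z.2 * φ (n + 1) z.2 ^ 2) := by ring
      _ ≤ 1 * (δ (n + 1) * φ (n + 1) z.2 ^ 2) :=
        mul_le_mul hu₁ (u_mul_φ_sq_le hδn z.2) (mul_nonneg (u_mem_Icc hδ z.2).1 (sq_nonneg _))
          zero_le_one
      _ = δ (n + 1) * φ (n + 1) z.2 ^ 2 := one_mul _
  have hnonneg (z : ℝ × ℝ) : 0 ≤ φ (n + 1) z.2 * (u δ z.1 * u δ z.2 * φ (n + 1) z.2) := by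
    have := mul_nonneg (u_mem_Icc hδ z.1).1 (u_mem_Icc hδ z.2).1
    nlinarith [sq_nonneg (φ (n + 1) z.2)]
  have hint : Integrable (fun y => δ (n + 1) * φ (n + 1) y ^ 2) μI :=
    (Integrable.of_integral_ne_zero (by rw [integral_φ_sq]; exact one_ne_zero)).const_mul _
  calc _ ≤ ∫ z, δ (n + 1) * φ (n + 1) z.2 ^ 2 ∂μI2 :=
        integral_mono_of_nonneg (ae_of_all _ hnonneg) (hint.comp_snd μI) (ae_of_all _ hbound)
    _ = δ (n + 1) := by
        rw [μI2, integral_fun_snd (fun y => δ (n + 1) * φ (n + 1) y ^ 2), integral_const_mul,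
          integral_φ_sq, probReal_univ, one_smul, mul_one]

lemma inner_T₁_eq {T₁ : Lp ℂ 2 μI2 →L[ℂ] Lp ℂ 2 μI2}
    (hT₁ : ∀ f : Lp ℂ 2 μI2, (T₁ f : ℝ × ℝ → ℂ) =ᵐ[μI2] fun xy => ∫ s, f (s, xy.2) ∂μI)
    {n : ℕ} {f : Lp ℂ 2 μI2} (hf : f =ᵐ[μI2] fun z => (φ (n + 1) z.2 : ℂ)) :
    inner ℂ f (T₁ f) = 1 := by
  have hT₁f : T₁ f =ᵐ[μI2] fun z => (φ (n + 1) z.2 : ℂ) := by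
    filter_upwards [hT₁ f, Measure.quasiMeasurePreserving_snd.ae
      (ae_integral_fst_eq_of_ae_eq (μ := μI) (ν := μI) (g := fun y => (φ (n + 1) y : ℂ)) hf)]
      with z h₁ h₂
    rw [h₁, h₂, probReal_univ, one_smul]
  rw [inner_eq_integral_of_ae_eq_ofReal hf hT₁f, μI2,
    integral_fun_snd (fun y => φ (n + 1) y * φ (n + 1) y), probReal_univ, one_smul]
  simp_rw [← sq, integral_φ_sq, Complex.ofReal_one]

lemma inner_T₂_eq {T₂ : Lp ℂ 2 μI2 →L[ℂ] Lp ℂ 2 μI2}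
    (hT₂ : ∀ f : Lp ℂ 2 μI2,
      (T₂ f : ℝ × ℝ → ℂ) =ᵐ[μI2] fun xy => ∫ t, (k₂ xy.2 t : ℂ) * f (xy.1, t) ∂μI)
    {n : ℕ} {f : Lp ℂ 2 μI2} (hf : f =ᵐ[μI2] fun z => (φ (n + 1) z.2 : ℂ)) :
    inner ℂ f (T₂ f) = ((2 / 3 : ℝ) ^ (n + 1) : ℝ) := by
  have hslice : ∀ᵐ x ∂μI, ∀ y, ∫ t, (k₂ y t : ℂ) * f (x, t) ∂μI
      = (((2 / 3) ^ (n + 1) * φ (n + 1) y : ℝ) : ℂ) := by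
    filter_upwards [Measure.ae_ae_of_ae_prod hf] with x hx y
    rw [← integral_k₂_mul_φ, ← integral_complex_ofReal]
    refine integral_congr_ae ?_
    filter_upwards [hx] with t ht
    rw [ht]
    push_cast
    rfl
  have hT₂f : T₂ f =ᵐ[μI2] fun z => (((2 / 3) ^ (n + 1) * φ (n + 1) z.2 : ℝ) : ℂ) := by
    filter_upwards [hT₂ f, Measure.quasiMeasurePreserving_fst.ae hslice] with z h₁ h₂
    rw [h₁, h₂]
  rw [inner_eq_integral_of_ae_eq_ofReal hf hT₂f, μI2,
    integral_fun_snd (fun y => φ (n + 1) y * ((2 / 3) ^ (n + 1) * φ (n + 1) y)), probReal_univ,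
    one_smul]
  simp_rw [mul_left_comm _ ((2 / 3 : ℝ) ^ (n + 1)), ← sq]
  rw [integral_const_mul, integral_φ_sq, mul_one]

theorem inner_estimates_general
    (δ : ℕ → ℝ) (hδ₁ : δ 1 = 1)
    (hδ : ∀ n : ℕ, 2 ≤ n → 0 ≤ δ n ∧ δ n ≤ (Real.sqrt 2 / 3) ^ n)
    (H₀ : Lp ℂ 2 μI2 →L[ℂ] Lp ℂ 2 μI2)
    (hH₀ : ∀ f : Lp ℂ 2 μI2,
      (H₀ f : ℝ × ℝ → ℂ) =ᵐ[μI2] fun xy => ((u δ xy.1 * u δ xy.2 : ℝ) : ℂ) * f xy)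
    (T₁ T₂ : Lp ℂ 2 μI2 →L[ℂ] Lp ℂ 2 μI2)
    (hT₁ : ∀ f : Lp ℂ 2 μI2,
      (T₁ f : ℝ × ℝ → ℂ) =ᵐ[μI2] fun xy => ∫ s, f (s, xy.2) ∂μI)
    (hT₂ : ∀ f : Lp ℂ 2 μI2,
      (T₂ f : ℝ × ℝ → ℂ) =ᵐ[μI2] fun xy => ∫ t, (k₂ xy.2 t : ℂ) * f (xy.1, t) ∂μI)
    (γ : ℝ) :
    ∀ n : ℕ, 1 ≤ n →
      ∀ f : Lp ℂ 2 μI2, (f : ℝ × ℝ → ℂ) =ᵐ[μI2] (fun xy => (φ n xy.2 : ℂ)) →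
        (inner ℂ f (H₀ f) : ℂ).re ≤ δ n ∧
        (2 ≤ n →
          (inner ℂ f ((H₀ - (γ : ℂ) • T₁) f) : ℂ).re ≤ δ n - γ ∧
          δ n - γ < -γ + (2 / 3 : ℝ) ^ n ∧
          -γ + (2 / 3 : ℝ) ^ n = -γ + (inner ℂ f (T₂ f) : ℂ).re) := by
  intro n hn f hf
  obtain ⟨n, rfl⟩ : ∃ m, n = m + 1 := ⟨n - 1, by omega⟩
  have h_ratio : Real.sqrt 2 / 3 < 2 / 3 := by
    have : Real.sqrt 2 < 2 := by
      rw [sqrt_lt' two_pos]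
      norm_num
    linarith
  have hδIcc (k : ℕ) (hk : 2 ≤ k) : δ k ∈ Icc 0 1 :=
    ⟨(hδ k hk).1, (hδ k hk).2.trans (pow_le_one₀ (by positivity) (by linarith))⟩
  have hδn : 0 ≤ δ (n + 1) := by
    rcases Nat.eq_zero_or_pos n with rfl | hn
    · simp [hδ₁]
    · exact (hδ _ (by omega)).1
  have hH₀f := inner_H₀_le hδIcc hδn hH₀ hf
  refine ⟨hH₀f, fun hn₂ => ⟨?_, ?_, ?_⟩⟩
  · rw [sub_apply, smul_apply, inner_sub_right,
      inner_smul_right, inner_T₁_eq hT₁ hf, mul_one, Complex.sub_re, Complex.ofReal_re]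
    linarith
  · have : δ (n + 1) < (2 / 3) ^ (n + 1) :=
      (hδ _ hn₂).2.trans_lt (pow_lt_pow_left₀ h_ratio (by positivity) (by omega))
    linarith
  · rw [inner_T₂_eq hT₂ hf, Complex.ofReal_re]

/-- For `γ ≥ 2/3` and `fₙ(x,y) = φₙ(y)`: `⟨fₙ, H₀ fₙ⟩ ≤ δₙ` for every `n ≥ 1`, and for
`n ≥ 2`, `⟨fₙ, (H₀ - γT₁) fₙ⟩ ≤ δₙ - γ < -γ + (2/3)ⁿ = -γ + ⟨fₙ, T₂ fₙ⟩`. -/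
theorem inner_estimates
    (δ : ℕ → ℝ) (hδ₁ : δ 1 = 1)
    (hδ : ∀ n : ℕ, 2 ≤ n → 0 ≤ δ n ∧ δ n ≤ (Real.sqrt 2 / 3) ^ n)
    (H₀ : Lp ℂ 2 μI2 →L[ℂ] Lp ℂ 2 μI2)
    (hH₀ : ∀ f : Lp ℂ 2 μI2,
      (H₀ f : ℝ × ℝ → ℂ) =ᵐ[μI2] fun xy => ((u δ xy.1 * u δ xy.2 : ℝ) : ℂ) * f xy)
    (T₁ T₂ : Lp ℂ 2 μI2 →L[ℂ] Lp ℂ 2 μI2)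
    (hT₁ : ∀ f : Lp ℂ 2 μI2,
      (T₁ f : ℝ × ℝ → ℂ) =ᵐ[μI2] fun xy => ∫ s, f (s, xy.2) ∂μI)
    (hT₂ : ∀ f : Lp ℂ 2 μI2,
      (T₂ f : ℝ × ℝ → ℂ) =ᵐ[μI2] fun xy => ∫ t, (k₂ xy.2 t : ℂ) * f (xy.1, t) ∂μI)
    (γ : ℝ) (hγ : 2 / 3 ≤ γ) :
    ∀ n : ℕ, 1 ≤ n →
      ∀ f : Lp ℂ 2 μI2, (f : ℝ × ℝ → ℂ) =ᵐ[μI2] (fun xy => (φ n xy.2 : ℂ)) →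
        (inner ℂ f (H₀ f) : ℂ).re ≤ δ n ∧
        (2 ≤ n →
          (inner ℂ f ((H₀ - (γ : ℂ) • T₁) f) : ℂ).re ≤ δ n - γ ∧
          δ n - γ < -γ + (2 / 3 : ℝ) ^ n ∧
          -γ + (2 / 3 : ℝ) ^ n = -γ + (inner ℂ f (T₂ f) : ℂ).re) :=
  inner_estimates_general δ hδ₁ hδ H₀ hH₀ T₁ T₂ hT₁ hT₂ γ

end EfimovExample

end
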